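/- Let X be a finite abstract simplicial complex. Then for every integer k ≥ 0, C(X) ≤ M_k(X). -/

import Mathlib

/-- A finite abstract simplicial complex on vertex set `ℕ`: a finite family of
finite sets (faces) closed under taking subsets. -/
structure SComplex where
  faces : Finset (Finset ℕ)
  down_closed : ∀ ⦃σ⦄, σ ∈ faces → ∀ ⦃τ⦄, τ ⊆ σ → τ ∈ faces

namespace SComplex

/-- The vertex set of a simplicial complex. -/
def vertices (X : SComplex) : Finset ℕ := X.faces.sup id

/-- `σ` is a maximal face (facet) of `X`. -/
def IsMaximalFace (X : SComplex) (σ : Finset ℕ) : Prop :=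
  σ ∈ X.faces ∧ ∀ τ ∈ X.faces, σ ⊆ τ → τ = σ

/-- `(γ, σ)` is a free pair: `σ` is the unique maximal face containing `γ`. -/
def IsFreePair (X : SComplex) (γ σ : Finset ℕ) : Prop :=
  γ ∈ X.faces ∧ X.IsMaximalFace σ ∧ γ ⊆ σ ∧
    ∀ τ, X.IsMaximalFace τ → γ ⊆ τ → τ = σ

/-- The empty complex. -/
def empty : SComplex := ⟨∅, by intro σ h; simp at h⟩

/-- An elementary `d`-collapse from `X` to `Y`: there is a free pair `(γ, σ)`
with `|γ| ≤ d`, and `Y` is obtained from `X` by removing all faces `τ` with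
`γ ⊆ τ ⊆ σ`. -/
def ElemCollapse (d : ℕ) (X Y : SComplex) : Prop :=
  ∃ γ σ, X.IsFreePair γ σ ∧ γ.card ≤ d ∧
    Y.faces = X.faces.filter fun τ => ¬ (γ ⊆ τ ∧ τ ⊆ σ)

/-- `X` is `d`-collapsible: some finite sequence of elementary `d`-collapses
reduces `X` to the empty complex. -/
def Collapsible (d : ℕ) (X : SComplex) : Prop :=
  Relation.ReflTransGen (ElemCollapse d) X SComplex.empty

/-- The collapsibility number `C(X)`: the least `d` such that `X` is
`d`-collapsible. -/
noncomputable def collapsibility (X : SComplex) : ℕ :=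
  sInf {d | X.Collapsible d}

/-- The link of a face `σ`. -/
def link (X : SComplex) (σ : Finset ℕ) : SComplex where
  faces := X.faces.filter fun τ => σ ∩ τ = ∅ ∧ σ ∪ τ ∈ X.faces
  down_closed := by
    intro τ hτ ρ hρ
    simp only [Finset.mem_filter] at hτ ⊢
    have h1 : σ ∩ ρ ⊆ σ ∩ τ := Finset.inter_subset_inter (le_refl σ) hρ
    rw [hτ.2.1] at h1
    exact ⟨X.down_closed hτ.1 hρ, Finset.subset_empty.mp h1,
      X.down_closed hτ.2.2 (Finset.union_subset_union (le_refl σ) hρ)⟩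

/-- The deletion of a face `σ`. -/
def del (X : SComplex) (σ : Finset ℕ) : SComplex where
  faces := X.faces.filter fun τ => ¬ σ ⊆ τ
  down_closed := by
    intro τ hτ ρ hρ
    simp only [Finset.mem_filter] at hτ ⊢
    exact ⟨X.down_closed hτ.1 hρ, fun hc => hτ.2 (hc.trans hρ)⟩

/-- The induced subcomplex `X[A]` on a set `A` of vertices. -/
def induced (X : SComplex) (A : Finset ℕ) : SComplex where
  faces := X.faces.filter fun τ => τ ⊆ A
  down_closed := by
    intro τ hτ ρ hρ
    simp only [Finset.mem_filter] at hτ ⊢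
    exact ⟨X.down_closed hτ.1 hρ, hρ.trans hτ.2⟩

end SComplex
namespace SComplex

instance : DecidableEq SComplex := fun X Y =>
  decidable_of_iff (X.faces = Y.faces) (by cases X; cases Y; simp)

lemma singleton_mem_faces {X : SComplex} {v : ℕ} (hv : v ∈ X.vertices) :
    ({v} : Finset ℕ) ∈ X.faces := by
  rw [vertices, Finset.mem_sup] at hv
  obtain ⟨σ, hσ, hvσ⟩ := hv
  exact X.down_closed hσ (Finset.singleton_subset_iff.mpr hvσ)

lemma link_faces_card_lt {X : SComplex} {σ : Finset ℕ} (hσ : σ ∈ X.faces)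
    (hne : σ.Nonempty) : (X.link σ).faces.card < X.faces.card := by
  refine Finset.card_lt_card
    ((Finset.ssubset_iff_of_subset (Finset.filter_subset _ _)).mpr ⟨σ, hσ, ?_⟩)
  simp only [Finset.mem_filter, Finset.inter_self]
  intro h
  exact hne.ne_empty h.2.1

lemma del_faces_card_lt {X : SComplex} {σ : Finset ℕ} (hσ : σ ∈ X.faces) :
    (X.del σ).faces.card < X.faces.card := by
  refine Finset.card_lt_card
    ((Finset.ssubset_iff_of_subset (Finset.filter_subset _ _)).mpr ⟨σ, hσ, ?_⟩)
  simp [Finset.mem_filter]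

/-- `X^o`: the set of vertices `v` of `X` with `lk(v, X) ≠ del(v, X)`. -/
def coreVertices (X : SComplex) : Finset ℕ :=
  X.vertices.filter fun v => X.link {v} ≠ X.del {v}

/-- The invariant `M(X)` of Biyikoğlu and Civan: `M(X) = 0` if `X^o = ∅`, and
`M(X) = min_{v ∈ X^o} max {M(lk(v, X)) + 1, M(del(v, X))}` otherwise. -/
noncomputable def Mnum (X : SComplex) : ℕ :=
  if h : (coreVertices X).Nonempty then
    (coreVertices X).attach.inf' (Finset.attach_nonempty_iff.mpr h)
      (fun v => max (Mnum (X.link {v.1}) + 1) (Mnum (X.del {v.1})))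
  else 0
termination_by X.faces.card
decreasing_by
  · exact link_faces_card_lt
      (singleton_mem_faces (Finset.mem_of_mem_filter _ v.2))
      (Finset.singleton_nonempty _)
  · exact del_faces_card_lt
      (singleton_mem_faces (Finset.mem_of_mem_filter _ v.2))

end SComplex
namespace SComplex

/-- `X_(k)^o`: the set of `k`-dimensional faces `σ` of `X` with
`lk(σ, X) ≠ X[V(X) ∖ σ]`. -/
def kCore (X : SComplex) (k : ℕ) : Finset (Finset ℕ) :=
  X.faces.filter fun σ => σ.card = k + 1 ∧ X.link σ ≠ X.induced (X.vertices \ σ)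

mutual

/-- `M'_k(X)`: equal to `M(X)` for `k = 0`; for `k ≥ 1` it is `M_{k-1}(X)` if
`X_(k)^o = ∅` and
`min_{σ ∈ X_(k)^o} max {M'_k(del(σ, X)), M'_k(lk(σ, X)) + k + 1}` otherwise. -/
noncomputable def Mk' : ℕ → SComplex → ℕ
  | 0, X => Mnum X
  | k + 1, X =>
    if h : (X.kCore (k + 1)).Nonempty then
      (X.kCore (k + 1)).attach.inf' (Finset.attach_nonempty_iff.mpr h)
        (fun σ => max (Mk' (k + 1) (X.del σ.1)) (Mk' (k + 1) (X.link σ.1) + (k + 1) + 1))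
    else Mk k X
termination_by k X => (k, X.faces.card, 0)
decreasing_by
  · apply Prod.Lex.right
    apply Prod.Lex.left
    exact del_faces_card_lt (Finset.mem_of_mem_filter _ σ.2)
  · apply Prod.Lex.right
    apply Prod.Lex.left
    have hc := (Finset.mem_filter.mp σ.2).2.1
    exact link_faces_card_lt (Finset.mem_of_mem_filter _ σ.2)
      (Finset.card_pos.mp (by omega))
  · apply Prod.Lex.left; omega

/-- `M_k(X)`: `M_0(X) = M(X)` and `M_k(X) = min {M'_k(X), M_{k-1}(X)}`. -/
noncomputable def Mk : ℕ → SComplex → ℕ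
  | 0, X => Mnum X
  | k + 1, X => min (Mk' (k + 1) X) (Mk k X)
termination_by k X => (k, X.faces.card, 1)
decreasing_by
  · apply Prod.Lex.right
    apply Prod.Lex.right
    omega
  · apply Prod.Lex.left; omega

end

end SComplex

/-!
Since `σ` is the only maximal face above `γ` in a free pair `(γ, σ)`, the collapse at it is
just the deletion `del(γ, X)`. Deleting a face `σ` from `X` can be realised by collapses: an
elementary `d`-collapse of `lk(σ, X)` at the free pair `(γ, ρ)` lifts to the elementary
`(d + |σ|)`-collapse of `X` at `(γ ∪ σ, ρ ∪ σ)`, and collapsing the link away turns `X` into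
`del(σ, X)`. Hence `X` is `max {d, e + |σ|}`-collapsible whenever `del(σ, X)` is
`d`-collapsible and `lk(σ, X)` is `e`-collapsible, which is exactly the shape of the
recursions defining `M` and `M'_k`. When `X^o = ∅` every set of vertices is a face, so `X` is
a simplex and collapses in one step.
-/

namespace SComplex

@[ext]
lemma ext {X Y : SComplex} (h : X.faces = Y.faces) : X = Y := by
  cases X; cases Y; simpa using h

@[simp]
lemma mem_link {X : SComplex} {σ τ : Finset ℕ} :
    τ ∈ (X.link σ).faces ↔ Disjoint σ τ ∧ σ ∪ τ ∈ X.faces := by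
  simp only [link, Finset.mem_filter, Finset.disjoint_iff_inter_eq_empty]
  exact ⟨fun h => h.2, fun h => ⟨X.down_closed h.2 Finset.subset_union_right, h⟩⟩

@[simp]
lemma mem_del {X : SComplex} {σ τ : Finset ℕ} :
    τ ∈ (X.del σ).faces ↔ τ ∈ X.faces ∧ ¬ σ ⊆ τ :=
  Finset.mem_filter

lemma subset_vertices {X : SComplex} {σ : Finset ℕ} (h : σ ∈ X.faces) : σ ⊆ X.vertices :=
  Finset.le_sup (f := id) h

lemma del_del_of_subset {X : SComplex} {σ γ : Finset ℕ} (h : σ ⊆ γ) :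
    (X.del γ).del σ = X.del σ := by
  ext τ
  simp only [mem_del]
  exact ⟨fun hτ => ⟨hτ.1.1, hτ.2⟩, fun hτ => ⟨⟨hτ.1, fun hγ => hτ.2 (h.trans hγ)⟩, hτ.2⟩⟩

lemma link_del_union {X : SComplex} {σ γ : Finset ℕ} (hγσ : Disjoint γ σ) :
    (X.del (γ ∪ σ)).link σ = (X.link σ).del γ := by
  ext τ
  simp only [mem_link, mem_del, and_assoc, Finset.union_subset_iff, Finset.subset_union_left,
    and_true]
  exact and_congr_right' (and_congr_right' (not_congr
    ⟨fun h => hγσ.left_le_of_le_sup_left h, fun h => h.trans Finset.subset_union_right⟩))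

lemma del_eq_self_of_link_eq_empty {X : SComplex} {σ : Finset ℕ} (h : X.link σ = empty) :
    X.del σ = X := by
  have hσ : σ ∉ X.faces := fun hσ => by
    have : (∅ : Finset ℕ) ∈ (X.link σ).faces := by simpa using hσ
    simp [h, empty] at this
  ext τ
  simp only [mem_del, and_iff_left_iff_imp]
  exact fun hτ hστ => hσ (X.down_closed hτ hστ)

lemma isFreePair_iff {X : SComplex} {γ σ : Finset ℕ} :
    X.IsFreePair γ σ ↔ γ ⊆ σ ∧ σ ∈ X.faces ∧ ∀ τ ∈ X.faces, γ ⊆ τ → τ ⊆ σ := by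
  constructor
  · rintro ⟨-, hσ, hγσ, huniq⟩
    refine ⟨hγσ, hσ.1, fun τ hτ hγτ => ?_⟩
    obtain ⟨ρ, hτρ, hρ⟩ := X.faces.exists_le_maximal hτ
    have hρσ : ρ = σ :=
      huniq ρ ⟨hρ.prop, fun υ hυ hρυ => le_antisymm (hρ.2 hυ hρυ) hρυ⟩ (hγτ.trans hτρ)
    exact hρσ ▸ hτρ
  · rintro ⟨hγσ, hσ, hmax⟩
    exact ⟨X.down_closed hσ hγσ,
      ⟨hσ, fun τ hτ hστ => (hmax τ hτ (hγσ.trans hστ)).antisymm hστ⟩, hγσ,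
      fun τ hτ hγτ => (hτ.2 σ hσ (hmax τ hτ.1 hγτ)).symm⟩

lemma IsFreePair.of_link {X : SComplex} {σ γ ρ : Finset ℕ} (h : (X.link σ).IsFreePair γ ρ) :
    X.IsFreePair (γ ∪ σ) (ρ ∪ σ) := by
  have hγ : Disjoint σ γ := (mem_link.mp h.1).1
  obtain ⟨hγρ, hρ, hmax⟩ := isFreePair_iff.mp h
  refine isFreePair_iff.mpr ⟨Finset.union_subset_union_left hγρ,
    Finset.union_comm σ ρ ▸ (mem_link.mp hρ).2, fun τ hτ hγστ => ?_⟩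
  obtain ⟨hγτ, hστ⟩ := Finset.union_subset_iff.mp hγστ
  have hτσ : τ \ σ ∈ (X.link σ).faces :=
    mem_link.mpr ⟨Finset.disjoint_sdiff, by rwa [Finset.union_sdiff_of_subset hστ]⟩
  have := hmax _ hτσ (Finset.subset_sdiff.mpr ⟨hγτ, hγ.symm⟩)
  rw [sdiff_le_iff] at this
  exact Finset.union_comm σ ρ ▸ this

lemma elemCollapse_iff {d : ℕ} {X Y : SComplex} :
    ElemCollapse d X Y ↔ ∃ γ σ, X.IsFreePair γ σ ∧ γ.card ≤ d ∧ Y = X.del γ := by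
  have hdel : ∀ γ σ, X.IsFreePair γ σ →
      X.faces.filter (fun τ => ¬ (γ ⊆ τ ∧ τ ⊆ σ)) = (X.del γ).faces := fun γ σ h =>
    Finset.filter_congr fun τ hτ =>
      not_congr (and_iff_left_of_imp ((isFreePair_iff.mp h).2.2 τ hτ))
  constructor
  · rintro ⟨γ, σ, h, hd, hY⟩
    exact ⟨γ, σ, h, hd, ext (hY.trans (hdel γ σ h))⟩
  · rintro ⟨γ, σ, h, hd, rfl⟩
    exact ⟨γ, σ, h, hd, (hdel γ σ h).symm⟩

lemma ElemCollapse.mono {d d' : ℕ} (h : d ≤ d') {X Y : SComplex} (hXY : ElemCollapse d X Y) :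
    ElemCollapse d' X Y :=
  let ⟨γ, σ, hfree, hd, hY⟩ := hXY
  ⟨γ, σ, hfree, hd.trans h, hY⟩

lemma Collapsible.mono {d d' : ℕ} (h : d ≤ d') {X : SComplex} (hX : X.Collapsible d) :
    X.Collapsible d' :=
  Relation.ReflTransGen.mono (fun _ _ => ElemCollapse.mono h) _ _ hX

lemma ElemCollapse.exists_lift_link {d : ℕ} {X Y : SComplex} {σ : Finset ℕ}
    (h : ElemCollapse d (X.link σ) Y) :
    ∃ X', ElemCollapse (d + σ.card) X X' ∧ X'.link σ = Y ∧ X'.del σ = X.del σ := by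
  obtain ⟨γ, ρ, hfree, hd, rfl⟩ := elemCollapse_iff.mp h
  have hγσ : Disjoint γ σ := (mem_link.mp hfree.1).1.symm
  refine ⟨X.del (γ ∪ σ), elemCollapse_iff.mpr ⟨γ ∪ σ, ρ ∪ σ, hfree.of_link, ?_, rfl⟩,
    link_del_union hγσ, del_del_of_subset Finset.subset_union_right⟩
  exact (Finset.card_union_le γ σ).trans (Nat.add_le_add_right hd σ.card)

lemma exists_lift_link {d : ℕ} {X Y : SComplex} {σ : Finset ℕ}
    (h : Relation.ReflTransGen (ElemCollapse d) (X.link σ) Y) :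
    ∃ X', Relation.ReflTransGen (ElemCollapse (d + σ.card)) X X' ∧
      X'.link σ = Y ∧ X'.del σ = X.del σ := by
  induction h with
  | refl => exact ⟨X, .refl, rfl, rfl⟩
  | tail _ hstep ih =>
    obtain ⟨X', hXX', rfl, hdel⟩ := ih
    obtain ⟨X'', hX'X'', hlink, hdel'⟩ := hstep.exists_lift_link
    exact ⟨X'', hXX'.tail hX'X'', hlink, hdel'.trans hdel⟩

lemma Collapsible.reflTransGen_del_of_link {d : ℕ} {X : SComplex} {σ : Finset ℕ}
    (h : (X.link σ).Collapsible d) :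
    Relation.ReflTransGen (ElemCollapse (d + σ.card)) X (X.del σ) := by
  obtain ⟨X', hXX', hlink, hdel⟩ := exists_lift_link h
  rwa [← hdel, del_eq_self_of_link_eq_empty hlink]

lemma collapsible_of_del_of_link {d e : ℕ} {X : SComplex} {σ : Finset ℕ}
    (hdel : (X.del σ).Collapsible d) (hlink : (X.link σ).Collapsible e) :
    X.Collapsible (max d (e + σ.card)) :=
  (Relation.ReflTransGen.mono (fun _ _ => ElemCollapse.mono (le_max_right _ _))
    _ _ hlink.reflTransGen_del_of_link).trans (hdel.mono (le_max_left _ _))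

lemma collapsible_inf' {ι : Type*} {X : SComplex} {s : Finset ι} (H : s.Nonempty) {f : ι → ℕ}
    (h : ∀ i ∈ s, X.Collapsible (f i)) : X.Collapsible (s.inf' H f) := by
  obtain ⟨i, hi, heq⟩ := s.exists_mem_eq_inf' H f
  exact heq ▸ h i hi

lemma vertices_mem_faces {X : SComplex} (hX : X.faces.Nonempty) (h : X.coreVertices = ∅) :
    X.vertices ∈ X.faces := by
  suffices ∀ A ⊆ X.vertices, A ∈ X.faces from this _ subset_rfl
  intro A
  induction A using Finset.induction_on with
  | empty =>
    obtain ⟨σ, hσ⟩ := hX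
    exact fun _ => X.down_closed hσ (Finset.empty_subset σ)
  | insert v A hv ih =>
    intro hA
    rw [Finset.insert_subset_iff] at hA
    have hlink : X.link {v} = X.del {v} := by
      by_contra hne
      have : v ∈ X.coreVertices := Finset.mem_filter.mpr ⟨hA.1, hne⟩
      simp [h] at this
    have hA' : A ∈ (X.link {v}).faces := hlink ▸ mem_del.mpr ⟨ih hA.2, by simpa using hv⟩
    rw [Finset.insert_eq]
    exact (mem_link.mp hA').2

lemma collapsible_zero_of_vertices_mem_faces {X : SComplex} (h : X.vertices ∈ X.faces) :
    X.Collapsible 0 := by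
  have hfree : X.IsFreePair ∅ X.vertices :=
    isFreePair_iff.mpr ⟨Finset.empty_subset _, h, fun τ hτ _ => subset_vertices hτ⟩
  have hdel : empty = X.del ∅ := by ext τ; simp [empty]
  exact .single (elemCollapse_iff.mpr ⟨∅, _, hfree, le_rfl, hdel⟩)

lemma collapsible_zero_of_coreVertices_eq_empty {X : SComplex} (h : X.coreVertices = ∅) :
    X.Collapsible 0 := by
  rcases X.faces.eq_empty_or_nonempty with hX | hX
  · rw [show X = empty from ext hX]
    exact .refl
  · exact collapsible_zero_of_vertices_mem_faces (vertices_mem_faces hX h)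

theorem collapsible_Mnum (X : SComplex) : X.Collapsible (Mnum X) := by
  rw [Mnum]
  split_ifs with h
  · refine collapsible_inf' _ fun v _ => ?_
    have := collapsible_of_del_of_link (collapsible_Mnum (X.del {v.1}))
      (collapsible_Mnum (X.link {v.1}))
    rwa [Finset.card_singleton, max_comm] at this
  · exact collapsible_zero_of_coreVertices_eq_empty (Finset.not_nonempty_iff_eq_empty.mp h)
termination_by X.faces.card
decreasing_by
  · exact del_faces_card_lt (singleton_mem_faces (Finset.mem_of_mem_filter _ v.2))
  · exact link_faces_card_lt (singleton_mem_faces (Finset.mem_of_mem_filter _ v.2))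
      (Finset.singleton_nonempty _)

theorem collapsible_Mk'_succ (k : ℕ) (hk : ∀ Y : SComplex, Y.Collapsible (Mk k Y))
    (X : SComplex) : X.Collapsible (Mk' (k + 1) X) := by
  rw [Mk']
  split_ifs with h
  · refine collapsible_inf' _ fun σ _ => ?_
    have hcard : σ.1.card = k + 1 + 1 := (Finset.mem_filter.mp σ.2).2.1
    have := collapsible_of_del_of_link (collapsible_Mk'_succ k hk (X.del σ.1))
      (collapsible_Mk'_succ k hk (X.link σ.1))
    rwa [hcard, ← add_assoc] at this
  · exact hk X
termination_by X.faces.card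
decreasing_by
  · exact del_faces_card_lt (Finset.mem_of_mem_filter _ σ.2)
  · exact link_faces_card_lt (Finset.mem_of_mem_filter _ σ.2)
      (Finset.card_pos.mp ((Finset.mem_filter.mp σ.2).2.1 ▸ Nat.succ_pos _))

theorem collapsible_Mk (k : ℕ) (X : SComplex) : X.Collapsible (Mk k X) := by
  induction k generalizing X with
  | zero => rw [Mk]; exact collapsible_Mnum X
  | succ k ih =>
    rw [Mk]
    exact min_rec (p := X.Collapsible) (fun _ => collapsible_Mk'_succ k ih X) (fun _ => ih X)

end SComplex

/-- For every finite abstract simplicial complex `X` and every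
`k ≥ 0`, `C(X) ≤ M_k(X)`. -/
theorem collapsibility_le_Mk (X : SComplex) (k : ℕ) :
    X.collapsibility ≤ SComplex.Mk k X :=
  Nat.sInf_le (SComplex.collapsible_Mk k X)
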